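/- Define N_ℓ and Deg_ℓ as follows: N_ℓ(a,b,c) = 1 iff a,b,c ≤ ℓ, a+b+c even, |a-b| ≤ c ≤ a+b, a+b+c ≤ 2ℓ (else 0); c(x) = x²/2 + x; Deg_ℓ(λ₁,λ₂,λ₃,λ₄) = (1/(2(ℓ+2)))·[ (∑_{μ=0}^{ℓ} N_ℓ(λ₁,λ₂,μ)N_ℓ(μ,λ₃,λ₄))·∑_i c(λ_i) − ∑_{μ=0}^{ℓ} c(μ)·( N_ℓ(λ₁,λ₂,μ)N_ℓ(λ₃,λ₄,μ) + N_ℓ(λ₁,λ₃,μ)N_ℓ(λ₂,λ₄,μ) + N_ℓ(λ₁,λ₄,μ)N_ℓ(λ₂,λ₃,μ) ) ]. Suppose λ₁ ≤ λ₂ ≤ λ₃ ≤ λ₄ are nonnegative integers with even sum and λ₄ ≤ ℓ. Then Deg_ℓ(λ₁,λ₂,λ₃,λ₄) = max{0, (ℓ+1−λ₄)·((λ₁+λ₂+λ₃+λ₄)/2 − ℓ)} if λ₁+λ₄ ≥ λ₂+λ₃, and Deg_ℓ(λ₁,λ₂,λ₃,λ₄) = max{0, (ℓ+1+λ₁−(λ₁+λ₂+λ₃+λ₄)/2)·((λ₁+λ₂+λ₃+λ₄)/2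 − ℓ)} if λ₁+λ₄ ≤ λ₂+λ₃. -/

import Mathlib

open Finset

/-- The rank of the 3-point level-`ℓ` conformal block for `sl₂`. -/
def slTwoRank (ℓ a b c : ℕ) : ℕ :=
  if a ≤ ℓ ∧ b ≤ ℓ ∧ c ≤ ℓ ∧ Even (a + b + c) ∧
      ((a : ℤ) - (b : ℤ)).natAbs ≤ c ∧ c ≤ a + b ∧ a + b + c ≤ 2 * ℓ
  then 1 else 0

/-- The normalized Casimir eigenvalue `c(x) = x²/2 + x` for `sl₂`. -/
def casimir (x : ℕ) : ℚ := (x : ℚ) ^ 2 / 2 + (x : ℚ)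

/-- The degree on `M̄₀,₄` of the determinant of the level-`ℓ` 4-point
conformal block bundle for `sl₂` with weights `(l₁, l₂, l₃, l₄)`. -/
def degDet (ℓ l₁ l₂ l₃ l₄ : ℕ) : ℚ :=
  (1 / (2 * ((ℓ : ℚ) + 2))) *
    (((∑ μ ∈ Finset.range (ℓ + 1),
        slTwoRank ℓ l₁ l₂ μ * slTwoRank ℓ μ l₃ l₄ : ℕ) : ℚ) *
        (casimir l₁ + casimir l₂ + casimir l₃ + casimir l₄) -
      ∑ μ ∈ Finset.range (ℓ + 1), casimir μ *
        ((slTwoRank ℓ l₁ l₂ μ * slTwoRank ℓ l₃ l₄ μ +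
          slTwoRank ℓ l₁ l₃ μ * slTwoRank ℓ l₂ l₄ μ +
          slTwoRank ℓ l₁ l₄ μ * slTwoRank ℓ l₂ l₃ μ : ℕ) : ℚ))

/-!
For each pairing `{12|34}`, `{13|24}`, `{14|23}` of the weights, the `μ` with both 3-point ranks
nonzero form an arithmetic progression of step 2, and all three have the same length `n` (the rank
of the 4-point bundle). They start at `l₄ - lᵢ` when `l₂ + l₃ ≤ l₁ + l₄` and at `lᵢ - l₁` otherwise.
Summing the Casimir over them, the numerator of `degDet` is a cubic in `n` that factors as
`2 n (s - q + 1 - n) (n + q + 1)`, where `2 s` is the weight sum and `q = l₄`, resp. `q = s - l₁`.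
Since `n = max 0 (min (s - q + 1) (ℓ + 1 - q))`, this equals `2 (ℓ + 2) max 0 ((ℓ + 1 - q) (s - ℓ))`.
-/

/-- The condition defining `slTwoRank`, with the parity written so that `omega` can decide it. -/
def IsAdmissible (ℓ a b c : ℕ) : Prop :=
  a ≤ ℓ ∧ b ≤ ℓ ∧ c ≤ ℓ ∧ (a + b + c) % 2 = 0 ∧
    ((a : ℤ) - b).natAbs ≤ c ∧ c ≤ a + b ∧ a + b + c ≤ 2 * ℓ

instance (ℓ a b c : ℕ) : Decidable (IsAdmissible ℓ a b c) := by
  unfold IsAdmissible; infer_instance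

theorem slTwoRank_eq_ite (ℓ a b c : ℕ) :
    slTwoRank ℓ a b c = if IsAdmissible ℓ a b c then 1 else 0 :=
  if_congr (by simp only [IsAdmissible, Nat.even_iff]) rfl rfl

theorem slTwoRank_rotate (ℓ a b c : ℕ) : slTwoRank ℓ a b c = slTwoRank ℓ b c a := by
  rw [slTwoRank_eq_ite, slTwoRank_eq_ite]
  exact if_congr (by unfold IsAdmissible; omega) rfl rfl

theorem cast_slTwoRank_mul_slTwoRank (ℓ a b c d μ : ℕ) :
    ((slTwoRank ℓ a b μ * slTwoRank ℓ c d μ : ℕ) : ℚ) =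
      if IsAdmissible ℓ a b μ ∧ IsAdmissible ℓ c d μ then 1 else 0 := by
  rw [slTwoRank_eq_ite, slTwoRank_eq_ite]
  split_ifs <;> simp_all

def progression (A n : ℕ) : Finset ℕ :=
  (range n).map ⟨(A + 2 * ·), fun i j h => by simpa using h⟩

theorem sum_progression {M : Type*} [AddCommMonoid M] (A n : ℕ) (f : ℕ → M) :
    ∑ μ ∈ progression A n, f μ = ∑ j ∈ range n, f (A + 2 * j) :=
  sum_map _ _ _

theorem mem_progression {A n μ : ℕ} :
    μ ∈ progression A n ↔ A ≤ μ ∧ μ < A + 2 * n ∧ (μ + A) % 2 = 0 := by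
  simp only [progression, mem_map, mem_range]
  change (∃ j, j < n ∧ A + 2 * j = μ) ↔ _
  constructor
  · rintro ⟨j, hj, rfl⟩
    omega
  · intro h
    exact ⟨(μ - A) / 2, by omega, by omega⟩

theorem card_progression (A n : ℕ) : #(progression A n) = n := by
  simp [progression]

theorem sum_casimir_progression (A n : ℕ) :
    ∑ μ ∈ progression A n, casimir μ =
      n * ((A : ℚ) ^ 2 / 2 + A) + (A + 1) * n * (n - 1) + n * (n - 1) * (2 * n - 1) / 3 := by
  rw [sum_progression]
  induction n with
  | zero => simp
  | succ n ih =>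
    rw [sum_range_succ, ih, casimir]
    push_cast
    ring

section Channels

variable {ℓ a b c d : ℕ} {S : Finset ℕ}

theorem sum_mul_slTwoRank_mul_slTwoRank (f : ℕ → ℚ)
    (hS : ∀ μ, IsAdmissible ℓ a b μ ∧ IsAdmissible ℓ c d μ ↔ μ ∈ S) :
    ∑ μ ∈ range (ℓ + 1), f μ * ((slTwoRank ℓ a b μ * slTwoRank ℓ c d μ : ℕ) : ℚ) =
      ∑ μ ∈ S, f μ := by
  have hsub : S ⊆ range (ℓ + 1) := fun μ hμ => by
    have := ((hS μ).2 hμ).1.2.2.1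
    simp only [mem_range]; omega
  calc ∑ μ ∈ range (ℓ + 1), f μ * ((slTwoRank ℓ a b μ * slTwoRank ℓ c d μ : ℕ) : ℚ)
      = ∑ μ ∈ range (ℓ + 1), if μ ∈ S then f μ else 0 :=
        sum_congr rfl fun μ _ => by
          rw [cast_slTwoRank_mul_slTwoRank, mul_ite, mul_one, mul_zero]
          exact if_congr (hS μ) rfl rfl
    _ = ∑ μ ∈ S, f μ := by rw [sum_ite_mem, inter_eq_right.2 hsub]

theorem sum_slTwoRank_mul_slTwoRank
    (hS : ∀ μ, IsAdmissible ℓ a b μ ∧ IsAdmissible ℓ c d μ ↔ μ ∈ S) :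
    ((∑ μ ∈ range (ℓ + 1), slTwoRank ℓ a b μ * slTwoRank ℓ μ c d : ℕ) : ℚ) = #S := by
  simpa [slTwoRank_rotate ℓ _ c d] using sum_mul_slTwoRank_mul_slTwoRank (fun _ => 1) hS

end Channels

theorem degDet_eq_of_channels {ℓ l₁ l₂ l₃ l₄ A₁ A₂ A₃ n : ℕ}
    (h₁ : ∀ μ, IsAdmissible ℓ l₁ l₂ μ ∧ IsAdmissible ℓ l₃ l₄ μ ↔ μ ∈ progression A₁ n)
    (h₂ : ∀ μ, IsAdmissible ℓ l₁ l₃ μ ∧ IsAdmissible ℓ l₂ l₄ μ ↔ μ ∈ progression A₂ n)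
    (h₃ : ∀ μ, IsAdmissible ℓ l₁ l₄ μ ∧ IsAdmissible ℓ l₂ l₃ μ ↔ μ ∈ progression A₃ n) :
    degDet ℓ l₁ l₂ l₃ l₄ =
      (n * (casimir l₁ + casimir l₂ + casimir l₃ + casimir l₄) -
        (∑ μ ∈ progression A₁ n, casimir μ + ∑ μ ∈ progression A₂ n, casimir μ +
          ∑ μ ∈ progression A₃ n, casimir μ)) / (2 * (ℓ + 2)) := by
  simp only [degDet, Nat.cast_add, mul_add, sum_add_distrib]
  rw [sum_slTwoRank_mul_slTwoRank h₁, card_progression,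
    sum_mul_slTwoRank_mul_slTwoRank _ h₁, sum_mul_slTwoRank_mul_slTwoRank _ h₂,
    sum_mul_slTwoRank_mul_slTwoRank _ h₃]
  ring

theorem mul_sub_mul_add_eq_mul_max {K : Type*} [Field K] [LinearOrder K] [IsStrictOrderedRing K]
    {q s ℓ n : K} (hq : q ≤ ℓ + 1 ∨ ℓ ≤ s) (hn : n = max 0 (min (s - q + 1) (ℓ + 1 - q))) :
    n * (s - q + 1 - n) * (n + q + 1) = (ℓ + 2) * max 0 ((ℓ + 1 - q) * (s - ℓ)) := by
  rcases le_total ℓ s with hs | hs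
  · rw [min_eq_right (by linarith)] at hn
    rcases le_total 0 (ℓ + 1 - q) with hq' | hq'
    · rw [max_eq_right hq'] at hn
      rw [max_eq_right (mul_nonneg hq' (by linarith)), hn]
      ring
    · rw [max_eq_left hq'] at hn
      rw [max_eq_left (mul_nonpos_of_nonpos_of_nonneg hq' (by linarith)), hn]
      ring
  · rw [min_eq_left (by linarith)] at hn
    have hprod : (ℓ + 1 - q) * (s - ℓ) ≤ 0 := by
      rcases hq with hq | hq
      · exact mul_nonpos_of_nonneg_of_nonpos (by linarith) (by linarith)
      · rw [show s - ℓ = 0 by linarith, mul_zero]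
    rw [max_eq_left hprod]
    rcases max_choice 0 (s - q + 1) with h | h <;> rw [h] at hn <;> rw [hn] <;> ring

theorem degDet_eq_of_inner_le_outer {ℓ l₁ l₂ l₃ l₄ : ℕ}
    (h12 : l₁ ≤ l₂) (h23 : l₂ ≤ l₃) (h34 : l₃ ≤ l₄)
    (hev : Even (l₁ + l₂ + l₃ + l₄)) (h4 : l₄ ≤ ℓ) (hA : l₂ + l₃ ≤ l₁ + l₄) :
    degDet ℓ l₁ l₂ l₃ l₄ =
      max 0 (((ℓ : ℚ) + 1 - (l₄ : ℚ)) * (((l₁ : ℚ) + l₂ + l₃ + l₄) / 2 - (ℓ : ℚ))) := by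
  obtain ⟨s, hs⟩ := hev
  obtain ⟨n, hn⟩ : ∃ n : ℕ, (n : ℤ) = max 0 (min ((s : ℤ) - l₄ + 1) (ℓ + 1 - l₄)) :=
    ⟨_, Int.toNat_of_nonneg (le_max_left _ _)⟩
  rw [degDet_eq_of_channels (A₁ := l₄ - l₃) (A₂ := l₄ - l₂) (A₃ := l₄ - l₁) (n := n)
      (fun μ => by simp only [IsAdmissible, mem_progression]; omega)
      (fun μ => by simp only [IsAdmissible, mem_progression]; omega)
      (fun μ => by simp only [IsAdmissible, mem_progression]; omega),
    sum_casimir_progression, sum_casimir_progression, sum_casimir_progression,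
    Nat.cast_sub h34, Nat.cast_sub (h23.trans h34), Nat.cast_sub (h12.trans (h23.trans h34))]
  have hsq : ((l₁ : ℚ) + l₂ + l₃ + l₄) / 2 = s := by
    rw [div_eq_iff two_ne_zero, mul_two]; exact_mod_cast hs
  have key := mul_sub_mul_add_eq_mul_max (q := (l₄ : ℚ)) (s := (s : ℚ)) (ℓ := ℓ) (n := n)
    (Or.inl (by exact_mod_cast h4.trans (Nat.le_succ ℓ))) (by exact_mod_cast hn)
  rw [← hsq] at key
  rw [div_eq_iff (by positivity), casimir, casimir, casimir, casimir]
  linear_combination 2 * key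

theorem degDet_eq_of_outer_le_inner {ℓ l₁ l₂ l₃ l₄ : ℕ}
    (h12 : l₁ ≤ l₂) (h23 : l₂ ≤ l₃) (h34 : l₃ ≤ l₄)
    (hev : Even (l₁ + l₂ + l₃ + l₄)) (hB : l₁ + l₄ ≤ l₂ + l₃) :
    degDet ℓ l₁ l₂ l₃ l₄ =
      max 0 (((ℓ : ℚ) + 1 + (l₁ : ℚ) - ((l₁ : ℚ) + l₂ + l₃ + l₄) / 2) *
        (((l₁ : ℚ) + l₂ + l₃ + l₄) / 2 - (ℓ : ℚ))) := by
  obtain ⟨s, hs⟩ := hev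
  obtain ⟨n, hn⟩ : ∃ n : ℕ, (n : ℤ) = max 0 (min ((l₁ : ℤ) + 1) (ℓ + 1 + l₁ - s)) :=
    ⟨_, Int.toNat_of_nonneg (le_max_left _ _)⟩
  rw [degDet_eq_of_channels (A₁ := l₂ - l₁) (A₂ := l₃ - l₁) (A₃ := l₄ - l₁) (n := n)
      (fun μ => by simp only [IsAdmissible, mem_progression]; omega)
      (fun μ => by simp only [IsAdmissible, mem_progression]; omega)
      (fun μ => by simp only [IsAdmissible, mem_progression]; omega),
    sum_casimir_progression, sum_casimir_progression, sum_casimir_progression,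
    Nat.cast_sub h12, Nat.cast_sub (h12.trans h23), Nat.cast_sub (h12.trans (h23.trans h34))]
  have hsq : ((l₁ : ℚ) + l₂ + l₃ + l₄) / 2 = s := by
    rw [div_eq_iff two_ne_zero, mul_two]; exact_mod_cast hs
  have hq : (s : ℚ) - l₁ ≤ ℓ + 1 ∨ (ℓ : ℚ) ≤ s := by
    rcases (by omega : s ≤ ℓ + 1 + l₁ ∨ ℓ ≤ s) with h | h
    · exact Or.inl (sub_le_iff_le_add.2 (by exact_mod_cast h))
    · exact Or.inr (by exact_mod_cast h)
  have key := mul_sub_mul_add_eq_mul_max (q := (s : ℚ) - l₁) (s := (s : ℚ)) (ℓ := ℓ) (n := n)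
    hq (by rw [sub_sub_cancel, sub_sub_eq_add_sub]; exact_mod_cast hn)
  rw [sub_sub_cancel, sub_sub_eq_add_sub] at key
  rw [← hsq] at key
  rw [div_eq_iff (by positivity), casimir, casimir, casimir, casimir]
  linear_combination 2 * key

theorem stmt_9 (l₁ l₂ l₃ l₄ ℓ : ℕ)
    (h12 : l₁ ≤ l₂) (h23 : l₂ ≤ l₃) (h34 : l₃ ≤ l₄)
    (hev : Even (l₁ + l₂ + l₃ + l₄)) (h4 : l₄ ≤ ℓ) :
    (l₂ + l₃ ≤ l₁ + l₄ →
      degDet ℓ l₁ l₂ l₃ l₄ =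
        max 0 (((ℓ : ℚ) + 1 - (l₄ : ℚ)) *
          (((l₁ : ℚ) + l₂ + l₃ + l₄) / 2 - (ℓ : ℚ)))) ∧
    (l₁ + l₄ ≤ l₂ + l₃ →
      degDet ℓ l₁ l₂ l₃ l₄ =
        max 0 (((ℓ : ℚ) + 1 + (l₁ : ℚ) - ((l₁ : ℚ) + l₂ + l₃ + l₄) / 2) *
          (((l₁ : ℚ) + l₂ + l₃ + l₄) / 2 - (ℓ : ℚ)))) :=
  ⟨degDet_eq_of_inner_le_outer h12 h23 h34 hev h4, degDet_eq_of_outer_le_inner h12 h23 h34 hev⟩
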